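/- arXiv:2402.08575 — 2 statements merged into one kernel-verified Lean document; each statement's English description precedes it below -/
import Mathlib

section
/- Let k, A, w ∈ ℝ satisfy k ≠ 0, A ≠ 0, w ≠ 0, k − A ≠ 0, k − w ≠ 0, w − A ≠ 0 and k − w − A ≠ 0. If j, j₁, j' ∈ {−1, 1} satisfy j(k − A) + A = j₁ w + j'(k − w), then j = j₁ = j' = 1. -/
/-- Sign-identification lemma for the base case `t = 1` of the proof of
Theorem 1 of the paper: if `j(k − A) + A = j₁ w + j'(k − w)` with
`j, j₁, j' ∈ {−1, 1}` and the seven stated nondegeneracy conditions hold,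
then `j = j₁ = j' = 1`. -/
theorem sign_identification_base (k A w : ℝ)
    (hk : k ≠ 0) (hA : A ≠ 0) (hw : w ≠ 0)
    (hkA : k - A ≠ 0) (hkw : k - w ≠ 0) (hwA : w - A ≠ 0) (hkwA : k - w - A ≠ 0)
    (j j₁ j' : ℝ)
    (hj : j = -1 ∨ j = 1) (hj₁ : j₁ = -1 ∨ j₁ = 1) (hj' : j' = -1 ∨ j' = 1)
    (heq : j * (k - A) + A = j₁ * w + j' * (k - w)) :
    j = 1 ∧ j₁ = 1 ∧ j' = 1 := by
  rcases hj with rfl | rfl <;> rcases hj₁ with rfl | rfl <;> rcases hj' with rfl | rfl <;>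
    refine ⟨?_, ?_, ?_⟩ <;> first
    | rfl
    | (exfalso; first
        | (apply hk; linarith) | (apply hA; linarith) | (apply hw; linarith)
        | (apply hkA; linarith) | (apply hkw; linarith) | (apply hwA; linarith)
        | (apply hkwA; linarith))
end

section
/- Let (Ω, 𝓕, P) be a probability space, let T ≥ 1, let A_1, …, A_T ∈ 𝓕 and let B_0 ⊇ B_1 ⊇ … ⊇ B_T be events in 𝓕 with B_0 = Ω. Suppose P(A_1 ∩ … ∩ A_T ∩ B_T) > 0 and P(A_1 ∩ … ∩ A_{t−1} ∩ B_{t−1}) > 0 for each t, and suppose that for each t = 1, …, T the conditional probability of A_t given A_1 ∩ … ∩ A_{t−1} ∩ B_T equals its conditional probability given A_1 ∩ … ∩ A_{t−1} ∩ B_{t−1}, i.e. P(A_t | A_1 ∩ … ∩ A_{t−1} ∩ B_T) = P(A_t | A_1 ∩ … ∩ A_{t−1} ∩ B_{t−1}). Then P(A_1 ∩ … ∩ A_T | B_T) = ∏_{t=1}^{T} P(A_t | A_1 ∩ … ∩ A_{t−1} ∩ B_{t−1}). -/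
open MeasureTheory ProbabilityTheory

/-- Telescoping reweighting identity of Section 3.1 of the paper: if the
conditional probability of the period-`t` assignment event `A t` given the full
potential-outcome event `B T` equals its conditional probability given only the
period-`(t−1)` information `B (t−1)`, then the overall selection probability
factors into the product of one-period-ahead conditional choice probabilities. -/
theorem telescoping_selection {Ω : Type*} [MeasurableSpace Ω]
    (P : Measure Ω) [IsProbabilityMeasure P]
    (T : ℕ) (hT : 1 ≤ T)
    (A B : ℕ → Set Ω)
    (hA : ∀ t, MeasurableSet (A t)) (hB : ∀ t, MeasurableSet (B t))
    (hB0 : B 0 = Set.univ)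
    (hmono : ∀ s t, s ≤ t → t ≤ T → B t ⊆ B s)
    (hposT : 0 < P ((⋂ s ∈ Finset.Icc 1 T, A s) ∩ B T))
    (hpos : ∀ t ∈ Finset.Icc 1 T,
      0 < P ((⋂ s ∈ Finset.Icc 1 (t - 1), A s) ∩ B (t - 1)))
    (hsel : ∀ t ∈ Finset.Icc 1 T,
      P[A t | (⋂ s ∈ Finset.Icc 1 (t - 1), A s) ∩ B T] =
        P[A t | (⋂ s ∈ Finset.Icc 1 (t - 1), A s) ∩ B (t - 1)]) :
    P[⋂ s ∈ Finset.Icc 1 T, A s | B T] =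
      ∏ t ∈ Finset.Icc 1 T,
        P[A t | (⋂ s ∈ Finset.Icc 1 (t - 1), A s) ∩ B (t - 1)] := by
  classical
  have hBTpos : 0 < P (B T) :=
    lt_of_lt_of_le hposT (measure_mono Set.inter_subset_right)
  have key : ∀ n, n ≤ T →
      P (B T ∩ ⋂ s ∈ Finset.Icc 1 n, A s) =
        P (B T) * ∏ t ∈ Finset.Icc 1 n,
          P[A t | (⋂ s ∈ Finset.Icc 1 (t - 1), A s) ∩ B (t - 1)] := by
    intro n
    induction n with
    | zero => intro _; simp
    | succ n ih =>
      intro hle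
      have hn : n ≤ T := Nat.le_of_succ_le hle
      have ih' := ih hn
      have hmeas : MeasurableSet ((⋂ s ∈ Finset.Icc 1 n, A s) ∩ B T) :=
        (Finset.measurableSet_biInter _ (fun s _ => hA s)).inter (hB T)
      have hset : B T ∩ ⋂ s ∈ Finset.Icc 1 (n + 1), A s =
          ((⋂ s ∈ Finset.Icc 1 n, A s) ∩ B T) ∩ A (n + 1) := by
        ext x
        simp only [Set.mem_inter_iff, Set.mem_iInter, Finset.mem_Icc]
        constructor
        · rintro ⟨hx, hAx⟩
          exact ⟨⟨fun s hs => hAx s ⟨hs.1, hs.2.trans (Nat.le_succ n)⟩, hx⟩,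
            hAx (n + 1) ⟨Nat.succ_le_succ (Nat.zero_le n), le_rfl⟩⟩
        · rintro ⟨⟨hAx, hx⟩, hA1⟩
          refine ⟨hx, fun s hs => ?_⟩
          rcases Nat.lt_succ_iff_lt_or_eq.mp (Nat.lt_succ_of_le hs.2) with h | h
          · exact hAx s ⟨hs.1, Nat.lt_succ_iff.mp h⟩
          · exact h ▸ hA1
      have hprod : ∏ t ∈ Finset.Icc 1 (n + 1),
          P[A t | (⋂ s ∈ Finset.Icc 1 (t - 1), A s) ∩ B (t - 1)] =
          (∏ t ∈ Finset.Icc 1 n,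
            P[A t | (⋂ s ∈ Finset.Icc 1 (t - 1), A s) ∩ B (t - 1)]) *
          P[A (n + 1) | (⋂ s ∈ Finset.Icc 1 n, A s) ∩ B n] := by
        rw [Finset.prod_Icc_succ_top (Nat.succ_le_succ (Nat.zero_le n))]
        simp
      have hselT := hsel (n + 1) (Finset.mem_Icc.mpr ⟨Nat.succ_le_succ (Nat.zero_le n), hle⟩)
      simp only [Nat.add_sub_cancel] at hselT
      calc P (B T ∩ ⋂ s ∈ Finset.Icc 1 (n + 1), A s)
          = P (((⋂ s ∈ Finset.Icc 1 n, A s) ∩ B T) ∩ A (n + 1)) := by rw [hset]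
        _ = P[A (n + 1) | (⋂ s ∈ Finset.Icc 1 n, A s) ∩ B T] *
            P ((⋂ s ∈ Finset.Icc 1 n, A s) ∩ B T) := (cond_mul_eq_inter hmeas _ P).symm
        _ = P[A (n + 1) | (⋂ s ∈ Finset.Icc 1 n, A s) ∩ B n] *
            P (B T ∩ ⋂ s ∈ Finset.Icc 1 n, A s) := by rw [hselT]; congr 1; rw [Set.inter_comm]
        _ = _ := by rw [ih', hprod]; ring
  have hkey := key T le_rfl
  rw [cond_apply (hB T), hkey, ← mul_assoc,
    ENNReal.inv_mul_cancel hBTpos.ne' (measure_ne_top P _), one_mul]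
end
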